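/- arXiv:1905.04570 — 2 statements merged into one kernel-verified Lean document; each statement's English description precedes it below -/
import Mathlib

section
/- An element x ∈ 𝓔 satisfies ⟨x, H−E_1⟩ = 0 if and only if x = E_i for some i with 2 ≤ i ≤ 9, or x = H − E_1 − E_i for some i with 2 ≤ i ≤ 9. -/
/-- The Picard lattice `L = ℤ^10` of a rational elliptic surface,
with basis `H, E_1, …, E_9` (index `0` is `H`, index `i+1` is `E_{i+1}`). -/
abbrev L : Type := Fin 10 → ℤ

/-- The hyperplane class `H`. -/
def Hcl : L := fun j => if j = 0 then 1 else 0

/-- The exceptional classes `E_1, …, E_9` (indexed by `Fin 9`). -/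
def Ecl (i : Fin 9) : L := fun j => if j = i.succ then 1 else 0

/-- The intersection form: `⟨H,H⟩ = 1`, `⟨E_i,E_i⟩ = -1`, with `H, E_1, …, E_9`
pairwise orthogonal. -/
def form (x y : L) : ℤ := x 0 * y 0 - ∑ i : Fin 9, x i.succ * y i.succ

/-- The fiber class `F = 3H - E_1 - ⋯ - E_9 = -K_X`. -/
def Fcl : L := (3 : ℤ) • Hcl - ∑ i : Fin 9, Ecl i

/-- The set `𝓔` of classes of `(-1)`-curves:
`x ∈ L` with `⟨x,x⟩ = -1` and `⟨x,F⟩ = 1`. -/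
def negCurves : Set L := {x | form x x = -1 ∧ form x Fcl = 1}

/-!
Write `x = a H + ∑ bᵢ Eᵢ`. Orthogonality to `H - E₁` says `b₁ = -a`, so `⟨x, x⟩ = -1` becomes
`∑_{i ≥ 2} bᵢ² = 1`: exactly one `bⱼ` with `j ≥ 2` is `±1` and the others vanish. Then
`⟨x, F⟩ = 1` reads `2a + bⱼ = 1`, leaving `(a, bⱼ) = (0, 1)` or `(1, -1)`.
-/

open Finset Matrix

lemma Int.exists_eq_one_or_neg_one_of_sum_sq_eq_one {ι : Type*} [DecidableEq ι] {s : Finset ι}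
    {f : ι → ℤ} (h : ∑ i ∈ s, f i ^ 2 = 1) :
    ∃ j ∈ s, (f j = 1 ∨ f j = -1) ∧ ∀ i ∈ s, i ≠ j → f i = 0 := by
  obtain ⟨j, hjs, hj⟩ : ∃ j ∈ s, f j ≠ 0 := by
    by_contra! h0
    have : ∑ i ∈ s, f i ^ 2 = 0 := sum_eq_zero fun i hi => by simp [h0 i hi]
    omega
  have hj_sq : 0 < f j ^ 2 := by positivity
  rw [← add_sum_erase s _ hjs] at h
  have hrest : ∑ i ∈ s.erase j, f i ^ 2 = 0 :=
    le_antisymm (by omega) (sum_nonneg fun _ _ => sq_nonneg _)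
  refine ⟨j, hjs, sq_eq_one_iff.1 (by omega), fun i hi hij => ?_⟩
  exact pow_eq_zero_iff two_ne_zero |>.1 <|
    (sum_eq_zero_iff_of_nonneg fun _ _ => sq_nonneg _).1 hrest i (mem_erase.2 ⟨hij, hi⟩)

lemma eq_single_add_single_of_eq_zero {ι M : Type*} [DecidableEq ι] [AddZeroClass M] {f : ι → M}
    {j k : ι} (hjk : j ≠ k) (hf : ∀ i, i ≠ j → i ≠ k → f i = 0) :
    f = Pi.single k (f k) + Pi.single j (f j) := by
  funext i
  by_cases hik : i = k
  · subst hik; simp [hjk.symm]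
  by_cases hij : i = j
  · subst hij; simp [hik]
  · simp [hik, hij, hf i hij hik]

lemma exists_eq_single_of_sq_sub_sum_sq_eq_neg_one {ι : Type*} [Fintype ι] [DecidableEq ι]
    {k : ι} {a : ℤ} {b : ι → ℤ} (hself : a ^ 2 - ∑ i, b i ^ 2 = -1)
    (hdeg : 3 * a + ∑ i, b i = 1) (hk : a + b k = 0) :
    ∃ j ≠ k, (a = 0 ∧ b = Pi.single j 1) ∨ (a = 1 ∧ b = -Pi.single k 1 - Pi.single j 1) := by
  rw [← add_sum_erase _ _ (mem_univ k)] at hself hdeg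
  obtain ⟨j, hj, hbj, hzero⟩ := Int.exists_eq_one_or_neg_one_of_sum_sq_eq_one
    (s := univ.erase k) (f := b) (by linear_combination -hself + (a - b k) * hk)
  have hjk : j ≠ k := ne_of_mem_erase hj
  rw [sum_eq_single_of_mem j hj hzero] at hdeg
  have hb : b = Pi.single k (b k) + Pi.single j (b j) :=
    eq_single_add_single_of_eq_zero hjk fun i hij hik => hzero i (mem_erase.2 ⟨hik, mem_univ i⟩) hij
  refine ⟨j, hjk, ?_⟩
  rcases hbj with hbj | hbj
  · refine Or.inl ⟨by omega, ?_⟩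
    rw [hb, hbj, show b k = 0 by omega, Pi.single_zero, zero_add]
  · refine Or.inr ⟨by omega, ?_⟩
    rw [hb, hbj, show b k = -1 by omega, Pi.single_neg, Pi.single_neg, sub_eq_add_neg]

lemma eq_iff_vecHead_eq_and_vecTail_eq {α : Type*} {n : ℕ} {x y : Fin (n + 1) → α} :
    x = y ↔ vecHead x = vecHead y ∧ vecTail x = vecTail y :=
  ⟨fun h => h ▸ ⟨rfl, rfl⟩, fun ⟨h0, ht⟩ => by rw [← cons_head_tail x, h0, ht, cons_head_tail]⟩

@[simp] lemma vecHead_Hcl : vecHead Hcl = 1 := rfl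

@[simp] lemma vecTail_Hcl : vecTail Hcl = 0 := by
  funext i; simp [vecTail, Hcl, Fin.succ_ne_zero]

@[simp] lemma vecHead_Ecl (i : Fin 9) : vecHead (Ecl i) = 0 := by
  simp [vecHead, Ecl, (Fin.succ_ne_zero i).symm]

@[simp] lemma vecTail_Ecl (i : Fin 9) : vecTail (Ecl i) = Pi.single i 1 := by
  funext j; simp [vecTail, Ecl, Pi.single_apply]

@[simp] lemma vecHead_Fcl : vecHead Fcl = 3 := by
  simp [Fcl, vecHead, Hcl, Ecl, Finset.sum_apply, (Fin.succ_ne_zero _).symm]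

@[simp] lemma vecTail_Fcl : vecTail Fcl = -1 := by
  funext j; simp [Fcl, vecTail, Hcl, Ecl, Finset.sum_apply, Fin.succ_ne_zero]

lemma form_eq (x y : L) : form x y = vecHead x * vecHead y - vecTail x ⬝ᵥ vecTail y := rfl

lemma form_self (x : L) : form x x = vecHead x ^ 2 - ∑ i, vecTail x i ^ 2 := by
  simp [form_eq, dotProduct, sq]

lemma form_Fcl (x : L) : form x Fcl = 3 * vecHead x + ∑ i, vecTail x i := by
  rw [form_eq, vecHead_Fcl, vecTail_Fcl, dotProduct_neg, dotProduct_one]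
  ring

lemma form_Hcl_sub_Ecl_zero (x : L) : form x (Hcl - Ecl 0) = vecHead x + vecTail x 0 := by
  simp [form_eq]

-- `Ecl 0` is `E_1`, so the indices `i ≠ 0` stand for `E_2, …, E_9`.
/-- A class `x ∈ 𝓔` satisfies `⟨x, H - E_1⟩ = 0` if and only
if `x = E_i` for some `2 ≤ i ≤ 9`, or `x = H - E_1 - E_i` for some `2 ≤ i ≤ 9`.
(Here `Ecl 0 = E_1`, and the indices `i ≠ 0` of `Ecl` correspond to `E_2, …, E_9`.) -/
theorem negCurves_orthogonal_to_H_sub_E1 (x : L) (hx : x ∈ negCurves) :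
    form x (Hcl - Ecl 0) = 0 ↔
      (∃ i : Fin 9, i ≠ 0 ∧ x = Ecl i) ∨
      (∃ i : Fin 9, i ≠ 0 ∧ x = Hcl - Ecl 0 - Ecl i) := by
  obtain ⟨hself, hdeg⟩ := hx
  rw [form_self] at hself
  rw [form_Fcl] at hdeg
  rw [form_Hcl_sub_Ecl_zero]
  constructor
  · intro hk
    obtain ⟨j, hj, ⟨ha, hb⟩ | ⟨ha, hb⟩⟩ :=
      exists_eq_single_of_sq_sub_sum_sq_eq_neg_one hself hdeg hk
    · exact Or.inl ⟨j, hj, eq_iff_vecHead_eq_and_vecTail_eq.2 ⟨by simp [ha], by simp [hb]⟩⟩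
    · exact Or.inr ⟨j, hj, eq_iff_vecHead_eq_and_vecTail_eq.2 ⟨by simp [ha], by simp [hb]⟩⟩
  · rintro (⟨i, hi, rfl⟩ | ⟨i, hi, rfl⟩) <;> simp [hi]
end

section
/- Fix an integer n ≥ 2. If (C,b) ∈ V satisfies λ_0(C,b) ≥ 0, λ_F(C,b) ≥ 0, and λ_x(C,b) ≥ 0 for all x ∈ 𝓔, then (C,b) lies in the convex cone spanned by 𝒩 × {0} and the single element ((n−1)F, −1/2); that is, there exist C' ∈ 𝒩 and a real number t ≥ 0 with (C,b) = (C',0) + t·((n−1)F, −1/2). -/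
/-- The real Néron–Severi space `L ⊗ ℝ = ℝ^10`. -/
abbrev LR : Type := Fin 10 → ℝ

/-- The natural inclusion `L → L ⊗ ℝ`. -/
def toR (x : L) : LR := fun j => (x j : ℝ)

/-- The intersection form extended to `L ⊗ ℝ`. -/
def formR (x y : LR) : ℝ := x 0 * y 0 - ∑ i : Fin 9, x i.succ * y i.succ

/-- The nef cone `𝒩 ⊆ L ⊗ ℝ`: classes meeting `F` and every `(-1)`-curve
nonnegatively. -/
def nefCone : Set LR :=
  {D | 0 ≤ formR D (toR Fcl) ∧ ∀ x ∈ negCurves, 0 ≤ formR D (toR x)}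

lemma formR_sub_smul_left (C y z : LR) (s : ℝ) :
    formR (C - s • y) z = formR C z - s * formR y z := by
  simp only [formR, Pi.sub_apply, Pi.smul_apply, smul_eq_mul, sub_mul, Finset.sum_sub_distrib,
    mul_sub, Finset.mul_sum, mul_assoc]
  ring

lemma formR_toR (x y : L) : formR (toR x) (toR y) = form x y := by
  simp [formR, form, toR]

lemma form_comm (x y : L) : form x y = form y x := by
  simp [form, mul_comm]

lemma form_Fcl_self : form Fcl Fcl = 0 := by decide

lemma formR_sub_smul_Fcl_Fcl (C : LR) (s : ℝ) :
    formR (C - s • toR Fcl) (toR Fcl) = formR C (toR Fcl) := by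
  rw [formR_sub_smul_left, formR_toR, form_Fcl_self]
  simp

lemma formR_sub_smul_Fcl_of_mem_negCurves (C : LR) (s : ℝ) {x : L} (hx : x ∈ negCurves) :
    formR (C - s • toR Fcl) (toR x) = formR C (toR x) - s := by
  rw [formR_sub_smul_left, formR_toR, form_comm, hx.2]
  simp

lemma sub_smul_Fcl_mem_nefCone {C : LR} {s : ℝ} (hF : 0 ≤ formR C (toR Fcl))
    (hE : ∀ x ∈ negCurves, s ≤ formR C (toR x)) : C - s • toR Fcl ∈ nefCone := by
  refine ⟨by rwa [formR_sub_smul_Fcl_Fcl], fun x hx => ?_⟩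
  rw [formR_sub_smul_Fcl_of_mem_negCurves C s hx]
  linarith [hE x hx]

/-- Fix `n ≥ 2`. A class `(C, b)` in the Néron–Severi space of
`X^[n]` (corresponding to `C^[n] + bB`) which meets `C_0`, `F_[n]`, and `x_[n]`
for all `x ∈ 𝓔` nonnegatively lies in the convex cone spanned by `𝒩 × {0}`
and `((n-1)F, -1/2)`. -/
theorem bounding_cone_decomposition (n : ℤ) (hn : 2 ≤ n) (C : LR) (b : ℝ)
    (h0 : 0 ≤ -2 * b)
    (hF : 0 ≤ formR C (toR Fcl) + 2 * (n : ℝ) * b)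
    (hE : ∀ x ∈ negCurves, 0 ≤ formR C (toR x) + (2 * (n : ℝ) - 2) * b) :
    ∃ C' ∈ nefCone, ∃ t : ℝ, 0 ≤ t ∧
      C = C' + t • (((n : ℝ) - 1) • toR Fcl) ∧ b = t * (-(1 / 2)) := by
  have hn' : (2 : ℝ) ≤ n := by exact_mod_cast hn
  have hCF : 0 ≤ formR C (toR Fcl) := by nlinarith
  have hCx : ∀ x ∈ negCurves, -2 * b * ((n : ℝ) - 1) ≤ formR C (toR x) := fun x hx => by
    linarith [hE x hx]
  refine ⟨C - (-2 * b * ((n : ℝ) - 1)) • toR Fcl, sub_smul_Fcl_mem_nefCone hCF hCx,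
    -2 * b, h0, ?_, by ring⟩
  rw [smul_smul, sub_add_cancel]
end
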